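/- arXiv:1806.09855 — 5 statements merged into one kernel-verified Lean document; each statement's English description precedes it below -/
import Mathlib

section
/- The subgroup of SL(2,ℤ) generated by a = [[0,-1],[1,-1]] and b = [[1,-3],[1,-2]] is isomorphic to the free product ℤ/3ℤ ∗ ℤ/3ℤ; equivalently, no nonempty reduced word alternating between {a,a²} and {b,b²} equals the identity. -/
/-!
Ping-pong on slopes. `SL(2, ℤ)` acts on `ℤ²`, hence by Möbius maps on slopes
`x = v₀ / v₁ ∈ ℚ ∪ {∞}`: `a` and `a²` map `(1, ∞]` into `(-∞, 1]`, while `b` and `b²` map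
`(-∞, 1]` into `(1, ∞]`. By the ping-pong lemma the homomorphism `ℤ/3 ∗ ℤ/3 → SL(2, ℤ)` sending
the two generators to `a` and `b` is injective, and its image is generated by `a` and `b`.
-/

open Matrix

def aSL : Matrix.SpecialLinearGroup (Fin 2) ℤ :=
  ⟨!![0, -1; 1, -1], by norm_num [Matrix.det_fin_two_of]⟩

def bSL : Matrix.SpecialLinearGroup (Fin 2) ℤ :=
  ⟨!![1, -3; 1, -2], by norm_num [Matrix.det_fin_two_of]⟩

open Pointwise Cardinal

universe u

section PowHom

variable {G : Type*} [Group G] {n : ℕ} [NeZero n]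

def zmodPowHom (g : G) (hg : g ^ n = 1) : Multiplicative (ZMod n) →* G where
  toFun x := g ^ x.toAdd.val
  map_one' := by rw [toAdd_one, ZMod.val_zero, pow_zero]
  map_mul' x y := by
    rw [toAdd_mul, ZMod.val_add, ← pow_eq_pow_mod _ hg, pow_add]

lemma zmodPowHom_ofAdd (g : G) (hg : g ^ n = 1) (x : ZMod n) :
    zmodPowHom g hg (.ofAdd x) = g ^ x.val := rfl

lemma range_zmodPowHom (g : G) (hg : g ^ n = 1) :
    (zmodPowHom g hg).range = Subgroup.closure {g} := by
  refine le_antisymm ?_ ((Subgroup.closure_le _).2 ?_)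
  · rintro _ ⟨x, rfl⟩
    exact Subgroup.pow_mem _ (Subgroup.subset_closure (Set.mem_singleton g)) _
  · rintro _ rfl
    refine ⟨.ofAdd 1, ?_⟩
    rw [zmodPowHom_ofAdd, ZMod.val_one_eq_one_mod, ← pow_eq_pow_mod _ hg, pow_one]

lemma zmodPowHom_three_eq_of_ne_one (g : G) (hg : g ^ 3 = 1) {x : Multiplicative (ZMod 3)}
    (hx : x ≠ 1) : zmodPowHom g hg x = g ∨ zmodPowHom g hg x = g ^ 2 := by
  obtain rfl | rfl : x = .ofAdd 1 ∨ x = .ofAdd 2 := by revert x; decide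
  · exact .inl (pow_one g)
  · exact .inr rfl

end PowHom

namespace Monoid.Coprod

variable {M : Bool → Type*} [∀ b, Monoid (M b)]

def toCoprodI : M true ∗ M false →* CoprodI M :=
  lift CoprodI.of CoprodI.of

def ofCoprodI : CoprodI M →* M true ∗ M false :=
  CoprodI.lift fun b => match b with
    | true => inl
    | false => inr

lemma ofCoprodI_comp_toCoprodI : ofCoprodI.comp toCoprodI = MonoidHom.id (M true ∗ M false) := by
  apply hom_ext <;> ext <;> simp [toCoprodI, ofCoprodI]

lemma toCoprodI_injective : Function.Injective (toCoprodI (M := M)) :=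
  Function.LeftInverse.injective (g := ofCoprodI) (DFunLike.congr_fun ofCoprodI_comp_toCoprodI)

theorem lift_injective_of_ping_pong {G α : Type*} {H₁ H₂ : Type u} [Group G] [MulAction G α]
    [Group H₁] [Group H₂] (f₁ : H₁ →* G) (f₂ : H₂ →* G) (hcard : 3 ≤ #H₁) {X₁ X₂ : Set α}
    (hX₁ : X₁.Nonempty) (hX₂ : X₂.Nonempty) (hX : Disjoint X₁ X₂)
    (h₁ : ∀ h ≠ 1, f₁ h • X₂ ⊆ X₁) (h₂ : ∀ h ≠ 1, f₂ h • X₁ ⊆ X₂) :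
    Function.Injective (lift f₁ f₂) := by
  let H : Bool → Type _ := fun b => cond b H₁ H₂
  let _ : ∀ b, Group (H b) := fun b => match b with
    | true => ‹Group H₁›
    | false => ‹Group H₂›
  let f : ∀ b, H b →* G := fun b => match b with
    | true => f₁
    | false => f₂
  let X : Bool → Set α := fun b => cond b X₁ X₂
  have hlift : lift f₁ f₂ = (CoprodI.lift f).comp (toCoprodI (M := H)) := by
    apply hom_ext <;> ext <;> simp [toCoprodI, f]
  rw [hlift]
  refine (CoprodI.lift_injective_of_ping_pong f (.inr ⟨true, hcard⟩) X ?_ ?_ ?_).comp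
    toCoprodI_injective
  · rintro (_ | _) <;> assumption
  · rintro (_ | _) (_ | _) h
    all_goals first | exact absurd rfl h | exact hX | exact hX.symm
  · rintro (_ | _) (_ | _) h
    all_goals first | exact absurd rfl h | assumption

theorem lift_zmodPowHom_injective_of_ping_pong {G α : Type*} [Group G]
    [MulAction G α] {g₁ g₂ : G} (hg₁ : g₁ ^ 3 = 1) (hg₂ : g₂ ^ 3 = 1) {X₁ X₂ : Set α}
    (hX₁ : X₁.Nonempty) (hX₂ : X₂.Nonempty) (hX : Disjoint X₁ X₂)
    (h₁ : g₁ • X₂ ⊆ X₁) (h₁' : g₁ ^ 2 • X₂ ⊆ X₁) (h₂ : g₂ • X₁ ⊆ X₂) (h₂' : g₂ ^ 2 • X₁ ⊆ X₂) :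
    Function.Injective (lift (zmodPowHom g₁ hg₁) (zmodPowHom g₂ hg₂)) := by
  refine lift_injective_of_ping_pong _ _ (by simp) hX₁ hX₂ hX (fun h hh => ?_) (fun h hh => ?_)
  · rcases zmodPowHom_three_eq_of_ne_one g₁ hg₁ hh with e | e <;> rw [e] <;> assumption
  · rcases zmodPowHom_three_eq_of_ne_one g₂ hg₂ hh with e | e <;> rw [e] <;> assumption

end Monoid.Coprod

lemma aSL_pow_three : aSL ^ 3 = 1 := Subtype.ext (by decide)

lemma bSL_pow_three : bSL ^ 3 = 1 := Subtype.ext (by decide)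

lemma aSL_smul (v : Fin 2 → ℤ) : aSL • v = ![-v 1, v 0 - v 1] := by
  rw [Matrix.SpecialLinearGroup.smul_def]
  ext i
  fin_cases i <;> simp [aSL, mulVec, dotProduct, Fin.sum_univ_two]
  ring

lemma bSL_smul (v : Fin 2 → ℤ) : bSL • v = ![v 0 - 3 * v 1, v 0 - 2 * v 1] := by
  rw [Matrix.SpecialLinearGroup.smul_def]
  ext i
  fin_cases i <;> simp [bSL, mulVec, dotProduct, Fin.sum_univ_two] <;> ring

lemma aSL_sq_smul (v : Fin 2 → ℤ) : aSL ^ 2 • v = ![v 1 - v 0, -v 0] := by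
  rw [pow_two, mul_smul, aSL_smul, aSL_smul]
  ext i
  fin_cases i <;> simp
  ring

lemma bSL_sq_smul (v : Fin 2 → ℤ) : bSL ^ 2 • v = ![3 * v 1 - 2 * v 0, v 1 - v 0] := by
  rw [pow_two, mul_smul, bSL_smul, bSL_smul]
  ext i
  fin_cases i <;> simp <;> ring

-- The slope `v 0 / v 1 ∈ ℚ ∪ {∞}` lies in `(-∞, 1]`, resp. in `(1, ∞]`.
def slopeLeOne : Set (Fin 2 → ℤ) := {v | v 1 ≠ 0 ∧ (v 0 - v 1) * v 1 ≤ 0}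

def slopeGtOne : Set (Fin 2 → ℤ) := {v | 0 < (v 0 - v 1) * v 1 ∨ (v 1 = 0 ∧ v 0 ≠ 0)}

lemma slopeLeOne_nonempty : slopeLeOne.Nonempty := ⟨![0, 1], by simp [slopeLeOne]⟩

lemma slopeGtOne_nonempty : slopeGtOne.Nonempty := ⟨![1, 0], by simp [slopeGtOne]⟩

lemma disjoint_slopeLeOne_slopeGtOne : Disjoint slopeLeOne slopeGtOne := by
  rw [Set.disjoint_left]
  rintro v ⟨hv₁, hle⟩ (hlt | ⟨hv₁', -⟩)
  · exact hle.not_gt hlt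
  · exact hv₁ hv₁'

lemma aSL_smul_slopeGtOne_subset : aSL • slopeGtOne ⊆ slopeLeOne := by
  rw [Set.smul_set_subset_iff]
  rintro v (hlt | ⟨hv₁, hv₀⟩) <;>
    simp only [slopeLeOne, aSL_smul, Set.mem_ofPred_eq, cons_val_zero, cons_val_one]
  · exact ⟨fun h => by simp_all, by nlinarith [sq_nonneg (v 0 - v 1)]⟩
  · rw [hv₁]
    exact ⟨by simpa using hv₀, by nlinarith [sq_nonneg (v 0)]⟩

lemma aSL_sq_smul_slopeGtOne_subset : aSL ^ 2 • slopeGtOne ⊆ slopeLeOne := by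
  rw [Set.smul_set_subset_iff]
  rintro v (hlt | ⟨hv₁, hv₀⟩) <;>
    simp only [slopeLeOne, aSL_sq_smul, Set.mem_ofPred_eq, cons_val_zero, cons_val_one]
  · refine ⟨fun h => ?_, by nlinarith [sq_nonneg (v 1)]⟩
    rw [neg_eq_zero.1 h] at hlt
    nlinarith [sq_nonneg (v 1)]
  · exact ⟨by simpa using hv₀, by simp [hv₁]⟩

lemma bSL_smul_slopeLeOne_subset : bSL • slopeLeOne ⊆ slopeGtOne := by
  rw [Set.smul_set_subset_iff]
  rintro v ⟨hv₁, hle⟩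
  simp only [slopeGtOne, bSL_smul, Set.mem_ofPred_eq, cons_val_zero, cons_val_one]
  left
  nlinarith [mul_self_pos.2 hv₁]

lemma bSL_sq_smul_slopeLeOne_subset : bSL ^ 2 • slopeLeOne ⊆ slopeGtOne := by
  rw [Set.smul_set_subset_iff]
  rintro v ⟨hv₁, hle⟩
  simp only [slopeGtOne, bSL_sq_smul, Set.mem_ofPred_eq, cons_val_zero, cons_val_one]
  rcases eq_or_ne (v 0) (v 1) with heq | hne
  · right
    rw [heq]
    exact ⟨sub_self _, by omega⟩
  · left
    have hlt : (v 0 - v 1) * v 1 < 0 := hle.lt_of_ne (mul_ne_zero (sub_ne_zero.2 hne) hv₁)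
    nlinarith [mul_self_pos.2 (sub_ne_zero.2 hne)]

/-- The subgroup of SL(2,ℤ) generated by a and b is isomorphic to the free
product ℤ/3ℤ ∗ ℤ/3ℤ. -/
theorem veech_group_free_product :
    Nonempty ((Subgroup.closure {aSL, bSL} : Subgroup (Matrix.SpecialLinearGroup (Fin 2) ℤ))
      ≃* Monoid.Coprod (Multiplicative (ZMod 3)) (Multiplicative (ZMod 3))) := by
  let φ := Monoid.Coprod.lift (zmodPowHom aSL aSL_pow_three) (zmodPowHom bSL bSL_pow_three)
  have hφ : Function.Injective φ :=
    Monoid.Coprod.lift_zmodPowHom_injective_of_ping_pong _ _ slopeLeOne_nonempty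
      slopeGtOne_nonempty disjoint_slopeLeOne_slopeGtOne aSL_smul_slopeGtOne_subset
      aSL_sq_smul_slopeGtOne_subset bSL_smul_slopeLeOne_subset bSL_sq_smul_slopeLeOne_subset
  have hrange : φ.range = Subgroup.closure {aSL, bSL} := by
    rw [Monoid.Coprod.range_lift, range_zmodPowHom, range_zmodPowHom, ← Subgroup.closure_union,
      Set.singleton_union]
  exact ⟨(MulEquiv.subgroupCongr hrange.symm).trans (MonoidHom.ofInjective hφ).symm⟩
end

section
/- With X, Y, and the cones Cₗ as in the ping-pong setup, the matrix b = [[1,-3],[1,-2]] satisfies b(Y) ⊆ X and b²(Y) ⊆ X. -/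
def cone (u w : ℝ × ℝ) : Set (ℝ × ℝ) :=
  {p | ∃ s t : ℝ, 0 ≤ s ∧ 0 ≤ t ∧ (s, t) ≠ (0, 0) ∧ p = s • u + t • w}

def vtx : Fin 7 → ℝ × ℝ
  | 0 => (1, 0)
  | 1 => (2, 1)
  | 2 => (1, 1)
  | 3 => (1, 2)
  | 4 => (0, 1)
  | 5 => (-1, 1)
  | 6 => (-1, 0)

def C (l : Fin 12) : Set (ℝ × ℝ) :=
  if h : (l : ℕ) < 6 then cone (vtx ⟨l, by omega⟩) (vtx ⟨(l : ℕ) + 1, by omega⟩)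
  else (fun p : ℝ × ℝ => -p) '' cone (vtx ⟨(l : ℕ) - 6, by omega⟩) (vtx ⟨(l : ℕ) - 5, by omega⟩)

def Xset : Set (ℝ × ℝ) := C 0 ∪ C 1 ∪ C 6 ∪ C 7

def Yset : Set (ℝ × ℝ) := C 2 ∪ C 3 ∪ C 4 ∪ C 5 ∪ C 8 ∪ C 9 ∪ C 10 ∪ C 11

/-- The linear action of b = [[1,-3],[1,-2]] on ℝ². -/
def bMap (p : ℝ × ℝ) : ℝ × ℝ := (p.1 - 3 * p.2, p.1 - 2 * p.2)

lemma neg_cone (u w : ℝ × ℝ) : (fun p : ℝ × ℝ => -p) '' cone u w = cone (-u) (-w) := by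
  ext p
  constructor
  · rintro ⟨q, ⟨s, t, hs, ht, h0, rfl⟩, rfl⟩
    exact ⟨s, t, hs, ht, h0, by module⟩
  · rintro ⟨s, t, hs, ht, h0, rfl⟩
    exact ⟨s • u + t • w, ⟨s, t, hs, ht, h0, rfl⟩, by module⟩

lemma C2_eq : C 2 = cone (1,1) (1,2) := rfl
lemma C3_eq : C 3 = cone (1,2) (0,1) := rfl
lemma C4_eq : C 4 = cone (0,1) (-1,1) := rfl
lemma C5_eq : C 5 = cone (-1,1) (-1,0) := rfl

lemma C8_eq : C 8 = cone (-1,-1) (-1,-2) := by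
  show (fun p : ℝ × ℝ => -p) '' cone (1,1) (1,2) = _
  rw [neg_cone, Prod.neg_mk, Prod.neg_mk]

lemma C9_eq : C 9 = cone (-1,-2) (0,-1) := by
  show (fun p : ℝ × ℝ => -p) '' cone (1,2) (0,1) = _
  rw [neg_cone, Prod.neg_mk, Prod.neg_mk]; norm_num

lemma C10_eq : C 10 = cone (0,-1) (1,-1) := by
  show (fun p : ℝ × ℝ => -p) '' cone (0,1) (-1,1) = _
  rw [neg_cone, Prod.neg_mk, Prod.neg_mk]; norm_num

lemma C11_eq : C 11 = cone (1,-1) (1,0) := by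
  show (fun p : ℝ × ℝ => -p) '' cone (-1,1) (-1,0) = _
  rw [neg_cone, Prod.neg_mk, Prod.neg_mk]; norm_num

lemma C6_eq : C 6 = cone (-1,0) (-2,-1) := by
  show (fun p : ℝ × ℝ => -p) '' cone (1,0) (2,1) = _
  rw [neg_cone, Prod.neg_mk, Prod.neg_mk]; norm_num

lemma C7_eq : C 7 = cone (-2,-1) (-1,-1) := by
  show (fun p : ℝ × ℝ => -p) '' cone (2,1) (1,1) = _
  rw [neg_cone, Prod.neg_mk, Prod.neg_mk]

lemma map_cone {f : ℝ × ℝ → ℝ × ℝ}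
    (hf : ∀ (s t : ℝ) (u w : ℝ × ℝ), f (s • u + t • w) = s • f u + t • f w)
    {u w a c : ℝ × ℝ} {α β γ δ : ℝ}
    (hα : 0 ≤ α) (hβ : 0 ≤ β) (hγ : 0 ≤ γ) (hδ : 0 ≤ δ)
    (h1 : 0 < α + β) (h2 : 0 < γ + δ)
    (hu : f u = α • a + β • c) (hw : f w = γ • a + δ • c)
    {p : ℝ × ℝ} (hp : p ∈ cone u w) : f p ∈ cone a c := by
  obtain ⟨s, t, hs, ht, h0, rfl⟩ := hp
  refine ⟨s * α + t * γ, s * β + t * δ, by positivity, by positivity, ?_, ?_⟩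
  · intro h
    rw [Prod.mk.injEq] at h
    have hst : s ≠ 0 ∨ t ≠ 0 := by
      by_contra hc
      push_neg at hc
      exact h0 (by rw [hc.1, hc.2])
    rcases hst with h' | h'
    · have hspos : 0 < s := hs.lt_of_ne (Ne.symm h')
      nlinarith [mul_pos hspos h1, mul_nonneg ht hγ, mul_nonneg ht hδ]
    · have htpos : 0 < t := ht.lt_of_ne (Ne.symm h')
      nlinarith [mul_pos htpos h2, mul_nonneg hs hα, mul_nonneg hs hβ]
  · rw [hf, hu, hw]; module

lemma bMap_lin : ∀ (s t : ℝ) (u w : ℝ × ℝ),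
    bMap (s • u + t • w) = s • bMap u + t • bMap w := by
  intro s t ⟨u1, u2⟩ ⟨w1, w2⟩
  simp only [bMap, Prod.smul_mk, Prod.mk_add_mk, smul_eq_mul, Prod.mk.injEq]
  constructor <;> ring

lemma b2_lin : ∀ (s t : ℝ) (u w : ℝ × ℝ),
    (bMap ∘ bMap) (s • u + t • w) = s • (bMap ∘ bMap) u + t • (bMap ∘ bMap) w := by
  intro s t ⟨u1, u2⟩ ⟨w1, w2⟩
  simp only [Function.comp, bMap, Prod.smul_mk, Prod.mk_add_mk, smul_eq_mul, Prod.mk.injEq]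
  constructor <;> ring

/-- Ping-pong for b: b(Y) ⊆ X and b²(Y) ⊆ X. -/
theorem b_ping_pong :
    bMap '' Yset ⊆ Xset ∧ (bMap ∘ bMap) '' Yset ⊆ Xset := by
  have norm01 : (0:ℝ) ≤ 1 := zero_le_one
  constructor
  · rintro _ ⟨q, hq, rfl⟩
    simp only [Yset, Set.mem_union] at hq
    rw [C2_eq, C3_eq, C4_eq, C5_eq, C8_eq, C9_eq, C10_eq, C11_eq] at hq
    -- target: C 7 = cone (-2,-1) (-1,-1), or C 1 = cone (2,1) (1,1)
    rcases hq with (((((((h | h) | h) | h) | h) | h) | h) | h)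
    · exact Or.inr (C7_eq ▸ map_cone bMap_lin (α := 1) (β := 0) (γ := 2) (δ := 1)
        (by norm_num) (by norm_num) (by norm_num) (by norm_num) (by norm_num) (by norm_num)
        (by norm_num [bMap, Prod.ext_iff]) (by norm_num [bMap, Prod.ext_iff]) h)
    · exact Or.inr (C7_eq ▸ map_cone bMap_lin (α := 2) (β := 1) (γ := 1) (δ := 1)
        (by norm_num) (by norm_num) (by norm_num) (by norm_num) (by norm_num) (by norm_num)
        (by norm_num [bMap, Prod.ext_iff]) (by norm_num [bMap, Prod.ext_iff]) h)
    · exact Or.inr (C7_eq ▸ map_cone bMap_lin (α := 1) (β := 1) (γ := 1) (δ := 2)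
        (by norm_num) (by norm_num) (by norm_num) (by norm_num) (by norm_num) (by norm_num)
        (by norm_num [bMap, Prod.ext_iff]) (by norm_num [bMap, Prod.ext_iff]) h)
    · exact Or.inr (C7_eq ▸ map_cone bMap_lin (α := 1) (β := 2) (γ := 0) (δ := 1)
        (by norm_num) (by norm_num) (by norm_num) (by norm_num) (by norm_num) (by norm_num)
        (by norm_num [bMap, Prod.ext_iff]) (by norm_num [bMap, Prod.ext_iff]) h)
    · exact Or.inl (Or.inl (Or.inr (map_cone (a := (2,1)) (c := (1,1)) bMap_lin
        (α := 1) (β := 0) (γ := 2) (δ := 1)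
        (by norm_num) (by norm_num) (by norm_num) (by norm_num) (by norm_num) (by norm_num)
        (by norm_num [bMap, Prod.ext_iff]) (by norm_num [bMap, Prod.ext_iff]) h)))
    · exact Or.inl (Or.inl (Or.inr (map_cone (a := (2,1)) (c := (1,1)) bMap_lin
        (α := 2) (β := 1) (γ := 1) (δ := 1)
        (by norm_num) (by norm_num) (by norm_num) (by norm_num) (by norm_num) (by norm_num)
        (by norm_num [bMap, Prod.ext_iff]) (by norm_num [bMap, Prod.ext_iff]) h)))
    · exact Or.inl (Or.inl (Or.inr (map_cone (a := (2,1)) (c := (1,1)) bMap_lin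
        (α := 1) (β := 1) (γ := 1) (δ := 2)
        (by norm_num) (by norm_num) (by norm_num) (by norm_num) (by norm_num) (by norm_num)
        (by norm_num [bMap, Prod.ext_iff]) (by norm_num [bMap, Prod.ext_iff]) h)))
    · exact Or.inl (Or.inl (Or.inr (map_cone (a := (2,1)) (c := (1,1)) bMap_lin
        (α := 1) (β := 2) (γ := 0) (δ := 1)
        (by norm_num) (by norm_num) (by norm_num) (by norm_num) (by norm_num) (by norm_num)
        (by norm_num [bMap, Prod.ext_iff]) (by norm_num [bMap, Prod.ext_iff]) h)))
  · rintro _ ⟨q, hq, rfl⟩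
    simp only [Yset, Set.mem_union] at hq
    rw [C2_eq, C3_eq, C4_eq, C5_eq, C8_eq, C9_eq, C10_eq, C11_eq] at hq
    -- target: C 0 = cone (1,0) (2,1), or C 6 = cone (-1,0) (-2,-1)
    rcases hq with (((((((h | h) | h) | h) | h) | h) | h) | h)
    · exact Or.inl (Or.inl (Or.inl (map_cone (a := ((1:ℝ),(0:ℝ))) (c := (2,1)) b2_lin
        (α := 1) (β := 0) (γ := 2) (δ := 1)
        (by norm_num) (by norm_num) (by norm_num) (by norm_num) (by norm_num) (by norm_num)
        (by norm_num [Function.comp, bMap, Prod.ext_iff]) (by norm_num [Function.comp, bMap, Prod.ext_iff]) h)))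
    · exact Or.inl (Or.inl (Or.inl (map_cone (a := ((1:ℝ),(0:ℝ))) (c := (2,1)) b2_lin
        (α := 2) (β := 1) (γ := 1) (δ := 1)
        (by norm_num) (by norm_num) (by norm_num) (by norm_num) (by norm_num) (by norm_num)
        (by norm_num [Function.comp, bMap, Prod.ext_iff]) (by norm_num [Function.comp, bMap, Prod.ext_iff]) h)))
    · exact Or.inl (Or.inl (Or.inl (map_cone (a := ((1:ℝ),(0:ℝ))) (c := (2,1)) b2_lin
        (α := 1) (β := 1) (γ := 1) (δ := 2)
        (by norm_num) (by norm_num) (by norm_num) (by norm_num) (by norm_num) (by norm_num)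
        (by norm_num [Function.comp, bMap, Prod.ext_iff]) (by norm_num [Function.comp, bMap, Prod.ext_iff]) h)))
    · exact Or.inl (Or.inl (Or.inl (map_cone (a := ((1:ℝ),(0:ℝ))) (c := (2,1)) b2_lin
        (α := 1) (β := 2) (γ := 0) (δ := 1)
        (by norm_num) (by norm_num) (by norm_num) (by norm_num) (by norm_num) (by norm_num)
        (by norm_num [Function.comp, bMap, Prod.ext_iff]) (by norm_num [Function.comp, bMap, Prod.ext_iff]) h)))
    · exact Or.inl (Or.inr (C6_eq ▸ map_cone b2_lin
        (α := 1) (β := 0) (γ := 2) (δ := 1)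
        (by norm_num) (by norm_num) (by norm_num) (by norm_num) (by norm_num) (by norm_num)
        (by norm_num [Function.comp, bMap, Prod.ext_iff]) (by norm_num [Function.comp, bMap, Prod.ext_iff]) h))
    · exact Or.inl (Or.inr (C6_eq ▸ map_cone b2_lin
        (α := 2) (β := 1) (γ := 1) (δ := 1)
        (by norm_num) (by norm_num) (by norm_num) (by norm_num) (by norm_num) (by norm_num)
        (by norm_num [Function.comp, bMap, Prod.ext_iff]) (by norm_num [Function.comp, bMap, Prod.ext_iff]) h))
    · exact Or.inl (Or.inr (C6_eq ▸ map_cone b2_lin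
        (α := 1) (β := 1) (γ := 1) (δ := 2)
        (by norm_num) (by norm_num) (by norm_num) (by norm_num) (by norm_num) (by norm_num)
        (by norm_num [Function.comp, bMap, Prod.ext_iff]) (by norm_num [Function.comp, bMap, Prod.ext_iff]) h))
    · exact Or.inl (Or.inr (C6_eq ▸ map_cone b2_lin
        (α := 1) (β := 2) (γ := 0) (δ := 1)
        (by norm_num) (by norm_num) (by norm_num) (by norm_num) (by norm_num) (by norm_num)
        (by norm_num [Function.comp, bMap, Prod.ext_iff]) (by norm_num [Function.comp, bMap, Prod.ext_iff]) h))
end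

section
/- Ping-pong lemma for two cyclic groups of order 3: let a group G act on a set Ω, let a, b ∈ G have order 3, and suppose there exist nonempty disjoint subsets X, Y ⊆ Ω with aⁱ(X) ⊆ Y and bⁱ(Y) ⊆ X for i = 1, 2. Then the subgroup ⟨a,b⟩ is isomorphic to the free product ℤ/3 ∗ ℤ/3. -/
open Monoid

private def zmodHom {G : Type*} [Group G] (a : G) (ha3 : a ^ 3 = 1) :
    Multiplicative (ZMod 3) →* G where
  toFun x := a ^ (Multiplicative.toAdd x).val
  map_one' := by simp
  map_mul' x y := by
    show a ^ ((Multiplicative.toAdd x + Multiplicative.toAdd y).val) = _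
    rw [ZMod.val_add, ← pow_eq_pow_mod _ ha3, pow_add]

/-- Ping-pong lemma for two cyclic groups of order 3: if a group G acts on a
set Ω, a, b ∈ G have order 3, and there are nonempty disjoint subsets
X, Y ⊆ Ω with aⁱ • X ⊆ Y and bⁱ • Y ⊆ X for i = 1, 2, then ⟨a, b⟩ is
isomorphic to ℤ/3 ∗ ℤ/3. -/
theorem ping_pong_order_three {G Ω : Type*} [Group G] [MulAction G Ω]
    (a b : G) (ha3 : a ^ 3 = 1) (hb3 : b ^ 3 = 1) (ha : a ≠ 1) (hb : b ≠ 1)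
    (X Y : Set Ω) (hX : X.Nonempty) (hY : Y.Nonempty) (hXY : Disjoint X Y)
    (haXY : ∀ i ∈ ({1, 2} : Set ℕ), ∀ x ∈ X, (a ^ i) • x ∈ Y)
    (hbYX : ∀ i ∈ ({1, 2} : Set ℕ), ∀ y ∈ Y, (b ^ i) • y ∈ X) :
    Nonempty ((Subgroup.closure {a, b} : Subgroup G)
      ≃* Monoid.Coprod (Multiplicative (ZMod 3)) (Multiplicative (ZMod 3))) := by
  classical
  set ZM := Multiplicative (ZMod 3)
  set fa : ZM →* G := zmodHom a ha3 with hfa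
  set fb : ZM →* G := zmodHom b hb3 with hfb
  -- valuation facts
  have hval : ∀ x : ZM, x ≠ 1 → ((Multiplicative.toAdd x).val ∈ ({1, 2} : Set ℕ)) := by
    intro x hx
    have h0 : (Multiplicative.toAdd x).val ≠ 0 := by
      intro h
      exact hx (by
        have := (ZMod.val_eq_zero _).mp h
        simpa [ZM] using this)
    have hlt : (Multiplicative.toAdd x).val < 3 := ZMod.val_lt _
    interval_cases h : (Multiplicative.toAdd x).val <;> simp_all
  -- the Bool-indexed family
  set F : Bool → Type _ := fun _ => ZM with hF
  set f : ∀ i, F i →* G := fun i => match i with | false => fa | true => fb with hf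
  set X' : Bool → Set Ω := fun i => match i with | false => Y | true => X with hX'
  have hinjI : Function.Injective (CoprodI.lift f) := by
    apply CoprodI.lift_injective_of_ping_pong f ?_ X' ?_ ?_ ?_
    case _ =>
      right
      refine ⟨false, le_of_eq ?_⟩
      have : Cardinal.mk (F false) = Cardinal.mk (ZMod 3) :=
        Cardinal.mk_congr (Multiplicative.toAdd (α := ZMod 3))
      rw [this, Cardinal.mk_fintype]
      norm_num
    case _ =>
      intro i
      cases i
      · exact hY
      · exact hX
    · intro i j hij
      cases i <;> cases j <;> simp_all [Function.onFun, hXY, hXY.symm]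
    · intro i j hij
      cases i <;> cases j <;> try exact absurd rfl hij
      · -- i = false (a side), j = true
        intro h hne
        rintro _ ⟨x, hx, rfl⟩
        exact haXY _ (hval h hne) x hx
      · intro h hne
        rintro _ ⟨y, hy, rfl⟩
        exact hbYX _ (hval h hne) y hy
  -- the binary coprod hom
  set φ : Coprod ZM ZM →* G := Coprod.lift fa fb with hφ
  set e : Coprod ZM ZM →* CoprodI F :=
    Coprod.lift (CoprodI.of (M := F) (i := false)) (CoprodI.of (M := F) (i := true)) with he
  have hcomp : (CoprodI.lift f).comp e = φ := by
    ext x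
    · simp [he, hφ, hf]
    · simp [he, hφ, hf]
  have hinj : Function.Injective φ := by
    rw [← hcomp]
    refine hinjI.comp ?_
    -- e is injective since it has a left inverse
    set r : CoprodI F →* Coprod ZM ZM :=
      CoprodI.lift (fun i => match i with | false => Coprod.inl | true => Coprod.inr) with hr
    have : r.comp e = MonoidHom.id _ := by ext x <;> simp [hr, he]
    intro x y hxy
    have h2 := congrArg r hxy
    have h3 : ∀ z, r (e z) = z := fun z => DFunLike.congr_fun this z
    rw [h3, h3] at h2
    exact h2
  have hgen : ∀ (c : G) (hc3 : c ^ 3 = 1), (zmodHom c hc3).range = Subgroup.zpowers c := by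
    intro c hc3
    apply le_antisymm
    · rintro _ ⟨x, rfl⟩
      exact Subgroup.mem_zpowers_iff.mpr ⟨((Multiplicative.toAdd x).val : ℤ), by rw [zpow_natCast]; rfl⟩
    · rw [Subgroup.zpowers_le]
      exact ⟨Multiplicative.ofAdd 1, by simp [zmodHom, show (1 : ZMod 3).val = 1 from rfl]⟩
  have hrange : φ.range = Subgroup.closure {a, b} := by
    rw [hφ, Coprod.range_lift, hfa, hfb, hgen a ha3, hgen b hb3,
      Subgroup.zpowers_eq_closure, Subgroup.zpowers_eq_closure,
      ← Subgroup.closure_union, Set.singleton_union]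
  exact ⟨((MonoidHom.ofInjective hinj).trans (MulEquiv.subgroupCongr hrange)).symm⟩
end

section
/- The 4×4 integer matrices ρ(a) = [[0,0,-1,0],[0,0,1,1],[0,1,0,-1],[1,0,1,1]] and ρ(b) = [[1,0,3,3],[-1,-1,-2,-1],[0,1,-1,-1],[-1,-1,-1,-1]] both preserve the skew-symmetric form Ω = [[0,0,-6,-3],[0,0,-3,3],[6,3,0,0],[3,-3,0,0]], i.e., ρ(a)ᵀ Ω ρ(a) = Ω and ρ(b)ᵀ Ω ρ(b) = Ω. -/
open Matrix

def rhoA : Matrix (Fin 4) (Fin 4) ℤ :=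
  !![0, 0, -1, 0; 0, 0, 1, 1; 0, 1, 0, -1; 1, 0, 1, 1]

def rhoB : Matrix (Fin 4) (Fin 4) ℤ :=
  !![1, 0, 3, 3; -1, -1, -2, -1; 0, 1, -1, -1; -1, -1, -1, -1]

def OmegaForm : Matrix (Fin 4) (Fin 4) ℤ :=
  !![0, 0, -6, -3; 0, 0, -3, 3; 6, 3, 0, 0; 3, -3, 0, 0]

/-- ρ(a) and ρ(b) preserve the intersection form Ω. -/
theorem rho_preserves_Omega :
    rhoA.transpose * OmegaForm * rhoA = OmegaForm ∧
    rhoB.transpose * OmegaForm * rhoB = OmegaForm := by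
  have hA : rhoAᵀ = !![0, 0, 0, 1; 0, 0, 1, 0; -1, 1, 0, 1; 0, 1, -1, 1] := by
    ext i j; fin_cases i <;> fin_cases j <;> rfl
  have hB : rhoBᵀ = !![1, -1, 0, -1; 0, -1, 1, -1; 3, -2, -1, -1; 3, -1, -1, -1] := by
    ext i j; fin_cases i <;> fin_cases j <;> rfl
  rw [show rhoA.transpose = rhoAᵀ from rfl, show rhoB.transpose = rhoBᵀ from rfl, hA, hB]
  constructor <;>
  · ext i j
    fin_cases i <;> fin_cases j <;>
      norm_num [rhoA, rhoB, OmegaForm, Matrix.mul_apply, Fin.sum_univ_four]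
      <;> rfl
end

section
/- Let U₁ = [[1,0,0,18],[0,1,0,0],[0,0,1,0],[0,0,0,1]], U₂ = [[1,0,18,0],[0,1,0,18],[0,0,1,0],[0,0,0,1]], U₃ = [[1,18,0,0],[0,1,0,0],[0,0,1,-18],[0,0,0,1]], U₄ = [[1,0,0,0],[0,1,-18,0],[0,0,1,0],[0,0,0,1]]. The subgroup of GL(4,ℤ) generated by U₁, U₂, U₃, U₄ has finite index in the group U(ℤ) of all upper unitriangular integer matrices of the form [[1,p,q,r],[0,1,s,q−ps],[0,0,1,−p],[0,0,0,1]] (unipotent upper triangular symplectic matrices for the standard symplectic form preserved by all four Uᵢ). -/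
/-!
Reduction modulo 18 maps `SL(4, ℤ)` to the finite group `SL(4, ℤ/18)`, so its kernel meets `U(ℤ)`
in a subgroup of finite index, and it suffices to show that this congruence subgroup lies in
`⟨U₁, U₂, U₃, U₄⟩`. Each element of `U(ℤ)` factors as a product along the one-parameter subgroups
through `U₃, U₂, U₁, U₄⁻¹`, with parameters `p, q - p s, r - p (q - p s), s`; if the element is
`≡ 1 mod 18`, all four parameters are divisible by 18 and each factor is a power of a generator.
-/

open Matrix

private lemma det_aux (p q r s : ℤ) :
    (!![1, p, q, r; 0, 1, s, q - p * s; 0, 0, 1, -p; 0, 0, 0, 1] :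
      Matrix (Fin 4) (Fin 4) ℤ).det = 1 := by
  simp [Matrix.det_succ_row_zero, Fin.sum_univ_succ]

def U1 : Matrix.SpecialLinearGroup (Fin 4) ℤ :=
  ⟨!![1, 0, 0, 18; 0, 1, 0, 0; 0, 0, 1, 0; 0, 0, 0, 1], by
    have := det_aux 0 0 18 0; simpa using this⟩

def U2 : Matrix.SpecialLinearGroup (Fin 4) ℤ :=
  ⟨!![1, 0, 18, 0; 0, 1, 0, 18; 0, 0, 1, 0; 0, 0, 0, 1], by
    have := det_aux 0 18 0 0; simpa using this⟩

def U3 : Matrix.SpecialLinearGroup (Fin 4) ℤ :=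
  ⟨!![1, 18, 0, 0; 0, 1, 0, 0; 0, 0, 1, -18; 0, 0, 0, 1], by
    have := det_aux 18 0 0 0; simpa using this⟩

def U4 : Matrix.SpecialLinearGroup (Fin 4) ℤ :=
  ⟨!![1, 0, 0, 0; 0, 1, -18, 0; 0, 0, 1, 0; 0, 0, 0, 1], by
    have := det_aux 0 0 0 (-18); simpa using this⟩

def UZ : Subgroup (Matrix.SpecialLinearGroup (Fin 4) ℤ) :=
  Subgroup.closure {M | ∃ p q r s : ℤ,
    (M : Matrix (Fin 4) (Fin 4) ℤ) = !![1, p, q, r; 0, 1, s, q - p * s; 0, 0, 1, -p; 0, 0, 0, 1]}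


theorem zpow_one_eq_of_map_add {G : Type*} [Group G] {f : ℤ → G}
    (hf : ∀ m n, f (m + n) = f m * f n) (n : ℤ) : f 1 ^ n = f n := by
  let φ : Multiplicative ℤ →* G := MonoidHom.mk' (f ∘ Multiplicative.toAdd) (fun a b => hf a b)
  have hφ : zpowersHom G (f 1) = φ := MonoidHom.ext_mint (by simp [φ])
  simpa [φ] using DFunLike.congr_fun hφ (Multiplicative.ofAdd n)

theorem Subgroup.relIndex_ne_zero_of_ker_inf_le {G Q : Type*} [Group G] [Group Q] [Finite Q]
    (f : G →* Q) {H K : Subgroup G} (h : f.ker ⊓ K ≤ H) : H.relIndex K ≠ 0 := by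
  have := Subgroup.isFiniteRelIndex_of_finiteIndex (H := f.ker) (K := K)
  refine ne_zero_of_dvd_ne_zero ?_ (Subgroup.relIndex_dvd_of_le_left K h)
  rw [Subgroup.inf_relIndex_right]
  exact Subgroup.relIndex_ne_zero

def symplecticUnipotent (p q r s : ℤ) : SpecialLinearGroup (Fin 4) ℤ :=
  ⟨!![1, p, q, r; 0, 1, s, q - p * s; 0, 0, 1, -p; 0, 0, 0, 1], det_aux p q r s⟩

namespace symplecticUnipotent

@[simp]
theorem coe (p q r s : ℤ) : (symplecticUnipotent p q r s : Matrix (Fin 4) (Fin 4) ℤ) =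
    !![1, p, q, r; 0, 1, s, q - p * s; 0, 0, 1, -p; 0, 0, 0, 1] :=
  rfl

@[simp]
theorem zero : symplecticUnipotent 0 0 0 0 = 1 := by
  ext i j
  fin_cases i <;> fin_cases j <;> rfl

theorem mul (p q r s p' q' r' s' : ℤ) :
    symplecticUnipotent p q r s * symplecticUnipotent p' q' r' s' =
      symplecticUnipotent (p + p') (q + q' + p * s') (r + r' + p * q' - p * p' * s' - q * p')
        (s + s') := by
  ext i j
  simp only [coe]
  fin_cases i <;> fin_cases j <;> simp [Matrix.mul_apply, Fin.sum_univ_four] <;> ring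

theorem inv (p q r s : ℤ) :
    (symplecticUnipotent p q r s)⁻¹ = symplecticUnipotent (-p) (p * s - q) (-r) (-s) := by
  refine (eq_inv_of_mul_eq_one_left ?_).symm
  rw [mul, ← zero]
  congr 1 <;> ring

theorem eq_mul (p q r s : ℤ) :
    symplecticUnipotent p q r s =
      symplecticUnipotent p 0 0 0 * symplecticUnipotent 0 (q - p * s) 0 0 *
        symplecticUnipotent 0 0 (r - p * (q - p * s)) 0 * symplecticUnipotent 0 0 0 s := by
  simp only [mul]
  congr 1 <;> ring

theorem zpow_of_mul_eq_zero {p q r s : ℤ} (h : p * s = 0) (n : ℤ) :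
    symplecticUnipotent p q r s ^ n = symplecticUnipotent (p * n) (q * n) (r * n) (s * n) := by
  have hom (m n : ℤ) :
      symplecticUnipotent (p * (m + n)) (q * (m + n)) (r * (m + n)) (s * (m + n)) =
        symplecticUnipotent (p * m) (q * m) (r * m) (s * m) *
          symplecticUnipotent (p * n) (q * n) (r * n) (s * n) := by
    rw [mul]
    rcases mul_eq_zero.mp h with rfl | rfl <;> congr 1 <;> ring
  simpa using zpow_one_eq_of_map_add
    (f := fun n => symplecticUnipotent (p * n) (q * n) (r * n) (s * n)) hom n

theorem mem_of_dvd {H : Subgroup (SpecialLinearGroup (Fin 4) ℤ)} {n p q r s : ℤ}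
    (hP : symplecticUnipotent n 0 0 0 ∈ H) (hQ : symplecticUnipotent 0 n 0 0 ∈ H)
    (hR : symplecticUnipotent 0 0 n 0 ∈ H) (hS : symplecticUnipotent 0 0 0 n ∈ H)
    (hp : n ∣ p) (hq : n ∣ q) (hr : n ∣ r) (hs : n ∣ s) : symplecticUnipotent p q r s ∈ H := by
  obtain ⟨a, rfl⟩ := hp
  obtain ⟨e, rfl⟩ := hs
  obtain ⟨b, hb⟩ := dvd_sub hq (dvd_mul_of_dvd_right (dvd_mul_right n e) (n * a))
  obtain ⟨c, hc⟩ := dvd_sub hr (dvd_mul_of_dvd_left (dvd_mul_right n a) (q - n * a * (n * e)))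
  have factor_mem {p q r s : ℤ} (hgen : symplecticUnipotent p q r s ∈ H) (h : p * s = 0) (k : ℤ) :
      symplecticUnipotent (p * k) (q * k) (r * k) (s * k) ∈ H :=
    zpow_of_mul_eq_zero h k ▸ zpow_mem hgen k
  rw [eq_mul, hc, hb]
  simpa using mul_mem (mul_mem (mul_mem (factor_mem hP (by simp) a) (factor_mem hQ (by simp) b))
    (factor_mem hR (by simp) c)) (factor_mem hS (by simp) e)

theorem dvd_of_map_eq_one {n : ℕ} {p q r s : ℤ}
    (h : SpecialLinearGroup.map (Int.castRingHom (ZMod n)) (symplecticUnipotent p q r s) = 1) :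
    (n : ℤ) ∣ p ∧ (n : ℤ) ∣ q ∧ (n : ℤ) ∣ r ∧ (n : ℤ) ∣ s := by
  have entry (i j : Fin 4) (hij : i ≠ j) :
      ((symplecticUnipotent p q r s : Matrix (Fin 4) (Fin 4) ℤ) i j : ZMod n) = 0 := by
    simpa [Matrix.one_apply_ne hij] using
      congr_arg (fun M : SpecialLinearGroup (Fin 4) (ZMod n) => M i j) h
  simp only [← ZMod.intCast_zmod_eq_zero_iff_dvd]
  exact ⟨entry 0 1 (by decide), entry 0 2 (by decide), entry 0 3 (by decide), entry 1 2 (by decide)⟩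

end symplecticUnipotent

def unipotentSubgroup : Subgroup (SpecialLinearGroup (Fin 4) ℤ) where
  carrier := {M | ∃ p q r s, symplecticUnipotent p q r s = M}
  one_mem' := ⟨0, 0, 0, 0, symplecticUnipotent.zero⟩
  mul_mem' := by
    rintro _ _ ⟨p, q, r, s, rfl⟩ ⟨p', q', r', s', rfl⟩
    exact ⟨_, _, _, _, (symplecticUnipotent.mul p q r s p' q' r' s').symm⟩
  inv_mem' := by
    rintro _ ⟨p, q, r, s, rfl⟩
    exact ⟨_, _, _, _, (symplecticUnipotent.inv p q r s).symm⟩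

theorem UZ_le_unipotentSubgroup : UZ ≤ unipotentSubgroup := by
  rw [UZ, Subgroup.closure_le]
  rintro M ⟨p, q, r, s, hM⟩
  exact ⟨p, q, r, s, Subtype.ext hM.symm⟩

theorem UZ_inf_ker_le_closure :
    (SpecialLinearGroup.map (Int.castRingHom (ZMod 18))).ker ⊓ UZ ≤
      Subgroup.closure {U1, U2, U3, U4} := by
  rintro _ ⟨hker, hUZ⟩
  obtain ⟨p, q, r, s, rfl⟩ := UZ_le_unipotentSubgroup hUZ
  obtain ⟨hp, hq, hr, hs⟩ := symplecticUnipotent.dvd_of_map_eq_one hker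
  have hU4 : U4⁻¹ = symplecticUnipotent 0 0 0 18 := by
    rw [show U4 = symplecticUnipotent 0 0 0 (-18) from rfl, symplecticUnipotent.inv]; rfl
  refine symplecticUnipotent.mem_of_dvd ?_ ?_ ?_ ?_ hp hq hr hs
  · exact Subgroup.subset_closure (show U3 ∈ _ by simp)
  · exact Subgroup.subset_closure (show U2 ∈ _ by simp)
  · exact Subgroup.subset_closure (show U1 ∈ _ by simp)
  · exact hU4 ▸ inv_mem (Subgroup.subset_closure (by simp))

/-- The subgroup generated by U₁, U₂, U₃, U₄ has finite index in U(ℤ). -/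
theorem unipotent_finite_index :
    (Subgroup.closure {U1, U2, U3, U4}).relIndex UZ ≠ 0 :=
  Subgroup.relIndex_ne_zero_of_ker_inf_le _ UZ_inf_ker_le_closure
end
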